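/- arXiv:1403.0359 — 2 statements merged into one kernel-verified Lean document; each statement's English description precedes it below -/
import Mathlib

section
/- Let G be a claw-free graph, I an independent set, and C an I-bad cycle that is resolvable with respect to I (i.e., there is a TS-sequence from I to some I' with G[I' ∪ B] acyclic, where [A,B] is the I-bipartition of C). Then there is a TS-sequence from I to I △ V(C) (the independent set obtained by 'turning' the cycle). -/
open SimpleGraph

/-- A graph is claw-free if no vertex has three pairwise nonadjacent neighbors. -/
def ClawFree {V : Type} (G : SimpleGraph V) : Prop :=
  ¬ ∃ v a b c : V, G.Adj v a ∧ G.Adj v b ∧ G.Adj v c ∧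
    a ≠ b ∧ a ≠ c ∧ b ≠ c ∧ ¬G.Adj a b ∧ ¬G.Adj a c ∧ ¬G.Adj b c

/-- `s` is an independent set of `G`. -/
def Indep {V : Type} (G : SimpleGraph V) (s : Set V) : Prop :=
  ∀ u ∈ s, ∀ v ∈ s, ¬G.Adj u v

/-- Token sliding step between independent sets. -/
def TSStep {V : Type} (G : SimpleGraph V) (I J : Set V) : Prop :=
  Indep G I ∧ Indep G J ∧ ∃ u v : V, G.Adj u v ∧ I \ J = {u} ∧ J \ I = {v}

/-- Token jumping step between independent sets. -/
def TJStep {V : Type} (G : SimpleGraph V) (I J : Set V) : Prop :=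
  Indep G I ∧ Indep G J ∧ ∃ u v : V, I \ J = {u} ∧ J \ I = {v}

/-- Reachability under token sliding. -/
def TSReach {V : Type} (G : SimpleGraph V) : Set V → Set V → Prop :=
  Relation.ReflTransGen (TSStep G)

/-- Reachability under token jumping. -/
def TJReach {V : Type} (G : SimpleGraph V) : Set V → Set V → Prop :=
  Relation.ReflTransGen (TJStep G)

/-- The neighbors of `v` inside the set `B`. -/
def nbrsIn {V : Type} (G : SimpleGraph V) (B : Set V) (v : V) : Set V :=
  {u ∈ B | G.Adj v u}

/-- `Nset G B i` is the set `N_i(B)` of vertices outside `B` with exactly `i` neighbors in `B`. -/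
def Nset {V : Type} (G : SimpleGraph V) (B : Set V) (i : ℕ) : Set V :=
  {v | v ∉ B ∧ (nbrsIn G B v).ncard = i}

/-- The neighborhood of a set. -/
def Nbhd {V : Type} (G : SimpleGraph V) (S : Set V) : Set V :=
  {w | ∃ u ∈ S, G.Adj w u}

/-- An `I`-bad cycle: a chordless `I`-alternating cycle `c 0, c 1, …, c (2n-1), c 0`
with `c j ∈ I` exactly for even `j`. -/
def IsBadCycle {V : Type} (G : SimpleGraph V) (I : Set V) (n : ℕ) (c : ZMod (2*n) → V) : Prop :=
  2 ≤ n ∧ Function.Injective c ∧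
  (∀ j : ZMod (2*n), G.Adj (c j) (c (j + 1))) ∧
  (∀ i j : ZMod (2*n), G.Adj (c i) (c j) → j = i + 1 ∨ i = j + 1) ∧
  (∀ j : ZMod (2*n), c j ∈ I ↔ Even (ZMod.val j))

/-- The part `A = V(C) ∩ I` of the `I`-bipartition of a bad cycle. -/
def cycA {V : Type} {n : ℕ} (c : ZMod (2*n) → V) : Set V :=
  c '' {j | Even (ZMod.val j)}

/-- The part `B = V(C) \ I` of the `I`-bipartition of a bad cycle. -/
def cycB {V : Type} {n : ℕ} (c : ZMod (2*n) → V) : Set V :=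
  c '' {j | ¬ Even (ZMod.val j)}

/-- The bad cycle `c` is resolvable with respect to `I`. -/
def Resolvable {V : Type} (G : SimpleGraph V) (I : Set V) {n : ℕ} (c : ZMod (2*n) → V) : Prop :=
  ∃ I' : Set V, TSReach G I I' ∧ (G.induce (I' ∪ cycB c)).IsAcyclic

/-- A vertex is free w.r.t. `I` if it is outside `I` and has at most one neighbor in `I`. -/
def FreeVert {V : Type} (G : SimpleGraph V) (I : Set V) (v : V) : Prop :=
  v ∉ I ∧ (nbrsIn G I v).ncard ≤ 1

/-- An `I`-augmenting path `x 0, x 1, …, x (2k)`: an `I`-alternating chordless path of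
length `2k ≥ 2` whose endpoints are free vertices. -/
def IsAugPath {V : Type} (G : SimpleGraph V) (I : Set V) (k : ℕ) (x : Fin (2*k+1) → V) : Prop :=
  1 ≤ k ∧ Function.Injective x ∧
  (∀ j : Fin (2*k), G.Adj (x j.castSucc) (x j.succ)) ∧
  (∀ i j : Fin (2*k+1), G.Adj (x i) (x j) → i.val + 1 = j.val ∨ j.val + 1 = i.val) ∧
  (∀ j : Fin (2*k+1), x j ∈ I ↔ Odd j.val) ∧
  FreeVert G I (x 0) ∧ FreeVert G I (x (Fin.last (2*k)))

/-!
Fix `B = V(C) \ I` and induct backwards along the TS-sequence `I = J₀ → J₁ → ⋯ → I'`, showing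
that from each `J` every `J`-bad cycle `d` with `V(d) \ J = B` can be turned. At `I'` there is
no such cycle, since it would lie in the forest `G[I' ∪ B]`. Let the step `J → J₁` move a token
from `u` to `v`; independence of `J₁` keeps `v` off `d`. If `u` is not on `d`, then `d` is still
`J₁`-bad: turn it from `J₁`, then slide the token from `v` back to `u`. If `u = d 0`, claw-freeness
at `d 0` makes `v` adjacent to `d 1` or `d (-1)`. If to both, replacing `d 0` by `v` gives a
`J₁`-bad cycle with the same turned set. If only to `d 1`, the cycle is turned by hand: after
`d 0 → v`, slide `d (2n-2) → d (2n-1)`, …, `d 2 → d 3` and finally `v → d 1`, all along the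
chordless path `v, d 1, …, d (2n-1)`.
-/

section TokenSliding

variable {V : Type} {G : SimpleGraph V}

theorem Indep.mono {s t : Set V} (hs : Indep G s) (hts : t ⊆ s) : Indep G t :=
  fun u hu v hv ↦ hs u (hts hu) v (hts hv)

theorem indep_insert {s : Set V} {a : V} :
    Indep G (insert a s) ↔ Indep G s ∧ ∀ b ∈ s, ¬G.Adj a b := by
  refine ⟨fun h ↦ ⟨h.mono (Set.subset_insert a s), fun b hb ↦ h a (Set.mem_insert a s) b
    (Set.mem_insert_of_mem a hb)⟩, ?_⟩
  rintro ⟨hs, ha⟩ x (rfl | hx) y (rfl | hy)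
  · exact G.irrefl
  · exact ha y hy
  · exact fun h ↦ ha x hx h.symm
  · exact hs x hx y hy

theorem TSStep.symm {I J : Set V} (h : TSStep G I J) : TSStep G J I :=
  let ⟨hI, hJ, u, v, huv, hu, hv⟩ := h
  ⟨hJ, hI, v, u, huv.symm, hv, hu⟩

theorem TSStep.exists_eq_insert_sdiff {I J : Set V} (h : TSStep G I J) :
    ∃ u v, G.Adj u v ∧ u ∈ I ∧ v ∉ I ∧ J = insert v (I \ {u}) := by
  obtain ⟨-, -, u, v, huv, hu, hv⟩ := h
  have hu' : u ∈ I \ J := hu ▸ rfl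
  have hv' : v ∈ J \ I := hv ▸ rfl
  refine ⟨u, v, huv, hu'.1, hv'.2, ?_⟩
  rw [← hu, Set.sdiff_sdiff_right_self, Set.insert_eq, ← hv]
  ext x
  simp only [Set.mem_union, Set.mem_sdiff, Set.mem_inter_iff]
  tauto

theorem tsStep_insert_sdiff {I : Set V} {u v : V} (hI : Indep G I)
    (hI' : Indep G (insert v (I \ {u}))) (huv : G.Adj u v) (hu : u ∈ I) (hv : v ∉ I) :
    TSStep G I (insert v (I \ {u})) := by
  refine ⟨hI, hI', u, v, huv, ?_, ?_⟩ <;> ext x <;> by_cases hxu : x = u <;>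
    by_cases hxv : x = v <;> simp_all

end TokenSliding

theorem Function.Injective.update {α β : Type*} [DecidableEq α] {f : α → β}
    (hf : Function.Injective f) (a : α) {b : β} (hb : b ∉ Set.range f) :
    Function.Injective (Function.update f a b) := by
  intro x y h
  by_cases hx : x = a <;> by_cases hy : y = a
  · exact hx.trans hy.symm
  · rw [hx, Function.update_self, Function.update_of_ne hy] at h
    exact absurd ⟨y, h.symm⟩ hb
  · rw [hy, Function.update_self, Function.update_of_ne hx] at h
    exact absurd ⟨x, h⟩ hb
  · rw [Function.update_of_ne hx, Function.update_of_ne hy] at h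
    exact hf h

theorem Function.Injective.range_update {α β : Type*} [DecidableEq α] {f : α → β}
    (hf : Function.Injective f) (a : α) (b : β) :
    Set.range (Function.update f a b) = insert b (Set.range f \ {f a}) := by
  ext y
  constructor
  · rintro ⟨j, rfl⟩
    rcases eq_or_ne j a with rfl | hj
    · simp
    · rw [Function.update_of_ne hj]
      exact Or.inr ⟨⟨j, rfl⟩, fun h ↦ hj (hf h)⟩
  · rintro (rfl | ⟨⟨j, rfl⟩, hj⟩)
    · exact ⟨a, by simp⟩
    · exact ⟨j, Function.update_of_ne (by rintro rfl; exact hj rfl) _ _⟩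

theorem Set.symmDiff_insert_sdiff_singleton {α : Type*} {s t : Set α} {a b : α} (has : a ∈ s)
    (hat : a ∈ t) (hbs : b ∉ s) (hbt : b ∉ t) :
    symmDiff (insert b (s \ {a})) (insert b (t \ {a})) = symmDiff s t := by
  ext y
  by_cases hya : y = a <;> by_cases hyb : y = b <;> simp_all [Set.mem_symmDiff]

theorem Set.insert_sdiff_singleton_sdiff {α : Type*} {s t : Set α} {a b : α} (has : a ∈ s)
    (hbt : b ∉ t) : insert b (t \ {a}) \ insert b (s \ {a}) = t \ s := by
  ext y
  by_cases hya : y = a <;> by_cases hyb : y = b <;> simp_all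

-- Makes the parity of `j.val` additive in `j`, which it is since `2 ∣ 2 * n`.
def parityHom (n : ℕ) : ZMod (2 * n) →+* ZMod 2 :=
  ZMod.castHom (dvd_mul_right 2 n) (ZMod 2)

theorem even_val_iff_parityHom_eq_zero {n : ℕ} (hn : n ≠ 0) (j : ZMod (2 * n)) :
    Even j.val ↔ parityHom n j = 0 := by
  have : NeZero (2 * n) := ⟨by omega⟩
  conv_rhs => rw [← ZMod.natCast_zmod_val j]
  rw [map_natCast, ZMod.natCast_eq_zero_iff, even_iff_two_dvd]

theorem ZMod.natCast_inj_of_lt {k a b : ℕ} (ha : a < k) (hb : b < k) :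
    (a : ZMod k) = b ↔ a = b := by
  rw [ZMod.natCast_eq_natCast_iff', Nat.mod_eq_of_lt ha, Nat.mod_eq_of_lt hb]

theorem ClawFree.adj_or_adj {V : Type} {G : SimpleGraph V} (hG : ClawFree G) {w a b x : V}
    (ha : G.Adj w a) (hb : G.Adj w b) (hx : G.Adj w x) (hab : a ≠ b) (hnab : ¬G.Adj a b)
    (hxa : x ≠ a) (hxb : x ≠ b) : G.Adj x a ∨ G.Adj x b := by
  by_contra! h
  exact hG ⟨w, a, b, x, ha, hb, hx, hab, hxa.symm, hxb.symm, hnab,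
    fun h' ↦ h.1 h'.symm, fun h' ↦ h.2 h'.symm⟩

theorem SimpleGraph.not_isAcyclic_of_injective {V : Type*} {G : SimpleGraph V} {k : ℕ}
    (hk : 3 ≤ k) {f : ZMod k → V} (hf : Function.Injective f)
    (hadj : ∀ j, G.Adj (f j) (f (j + 1))) : ¬G.IsAcyclic := by
  obtain ⟨m, rfl⟩ := Nat.exists_eq_add_of_le' hk
  let φ : cycleGraph (m + 3) →g G :=
    { toFun := f
      map_rel' := by
        rintro a b (h | h) <;> rw [sub_eq_iff_eq_add'] at h <;> subst h
        exacts [(hadj b).symm, hadj a] }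
  exact fun hG ↦ isAcyclic_iff_free_cycleGraph.mp (hG.comap φ hf) (m + 3) hk .rfl

theorem union_setOf_lt_succ {α : Type*} (R : Set α) (f : ℕ → α) (m : ℕ) :
    R ∪ {y | ∃ i < m + 1, f i = y} = insert (f m) (R ∪ {y | ∃ i < m, f i = y}) := by
  ext y
  simp only [Set.mem_union, Set.mem_ofPred_eq, Set.mem_insert_iff, Nat.lt_succ_iff_lt_or_eq,
    or_and_right, exists_or, exists_eq_left]
  rw [eq_comm (a := y)]
  simp only [or_comm, or_left_comm]

section ChordlessPath

variable {V : Type} {G : SimpleGraph V} {R : Set V} {x : ℕ → V} {m : ℕ}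

theorem indep_union_even (hR : Indep G R) (hRx : ∀ r ∈ R, ∀ i < 2 * m, ¬G.Adj r (x i))
    (hchord : ∀ a < 2 * m, ∀ b < 2 * m, G.Adj (x a) (x b) → a + 1 = b ∨ b + 1 = a) :
    Indep G (R ∪ {y | ∃ i < m, x (2 * i) = y}) := by
  rintro y (hy | ⟨i, hi, rfl⟩) z (hz | ⟨j, hj, rfl⟩) h
  · exact hR y hy z hz h
  · exact hRx y hy _ (by omega) h
  · exact hRx z hz _ (by omega) h.symm
  · have := hchord _ (by omega) _ (by omega) h
    omega

theorem notMem_union_even (hx : Set.InjOn x (Set.Iio (2 * (m + 1))))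
    (hadj : ∀ i < m + 1, G.Adj (x (2 * i)) (x (2 * i + 1)))
    (hRx : ∀ r ∈ R, ∀ i < 2 * (m + 1), ¬G.Adj r (x i)) {i : ℕ} (hi : 2 * m ≤ i)
    (hi' : i < 2 * (m + 1)) : x i ∉ R ∪ {y | ∃ j < m, x (2 * j) = y} := by
  rintro (hxi | ⟨j, hj, hji⟩)
  · obtain ⟨k, rfl | rfl⟩ := Nat.even_or_odd' i
    · exact hRx _ hxi (2 * k + 1) (by omega) (hadj k (by omega))
    · exact hRx _ hxi (2 * k) (by omega) (hadj k (by omega)).symm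
  · have := hx (Set.mem_Iio.mpr (by omega)) (Set.mem_Iio.mpr (by omega)) hji
    omega

theorem tsReach_slide_path (hR : Indep G R) (hx : Set.InjOn x (Set.Iio (2 * m)))
    (hadj : ∀ i < m, G.Adj (x (2 * i)) (x (2 * i + 1)))
    (hchord : ∀ a < 2 * m, ∀ b < 2 * m, G.Adj (x a) (x b) → a + 1 = b ∨ b + 1 = a)
    (hRx : ∀ r ∈ R, ∀ i < 2 * m, ¬G.Adj r (x i)) :
    TSReach G (R ∪ {y | ∃ i < m, x (2 * i) = y}) (R ∪ {y | ∃ i < m, x (2 * i + 1) = y}) := by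
  induction m generalizing R with
  | zero =>
    simp only [Nat.not_lt_zero, false_and, exists_false, Set.ofPred_false, Set.union_empty]
    exact .refl
  | succ m ih =>
    set E := {y | ∃ i < m, x (2 * i) = y}
    have hb : Indep G (insert (x (2 * m + 1)) R) := indep_insert.mpr
      ⟨hR, fun r hr h ↦ hRx r hr _ (by omega) h.symm⟩
    have hbRx : ∀ r ∈ insert (x (2 * m + 1)) R, ∀ i < 2 * m, ¬G.Adj r (x i) := by
      rintro r (rfl | hr) i hi h
      · have := hchord _ (by omega) _ (by omega) h
        omega
      · exact hRx r hr i (by omega) h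
    have hstart : R ∪ {y | ∃ i < m + 1, x (2 * i) = y} = insert (x (2 * m)) (R ∪ E) :=
      union_setOf_lt_succ R (fun i ↦ x (2 * i)) m
    have hmid : insert (x (2 * m + 1)) (insert (x (2 * m)) (R ∪ E) \ {x (2 * m)}) =
        insert (x (2 * m + 1)) R ∪ E := by
      rw [Set.insert_sdiff_self_of_notMem (notMem_union_even hx hadj hRx le_rfl (by omega)),
        Set.insert_union]
    have hend : insert (x (2 * m + 1)) R ∪ {y | ∃ i < m, x (2 * i + 1) = y} =
        R ∪ {y | ∃ i < m + 1, x (2 * i + 1) = y} := by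
      rw [Set.insert_union]
      exact (union_setOf_lt_succ R (fun i ↦ x (2 * i + 1)) m).symm
    have hstep : TSStep G (R ∪ {y | ∃ i < m + 1, x (2 * i) = y})
        (insert (x (2 * m + 1)) R ∪ E) := by
      rw [hstart, ← hmid]
      refine tsStep_insert_sdiff ?_ ?_ (hadj m (by omega)) (Set.mem_insert _ _) ?_
      · exact hstart ▸ indep_union_even hR hRx hchord
      · exact hmid ▸ indep_union_even hb hbRx fun a ha b hb ↦ hchord a (by omega) b (by omega)
      · rintro (h | h)
        · have := hx (Set.mem_Iio.mpr (by omega)) (Set.mem_Iio.mpr (by omega)) h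
          omega
        · exact notMem_union_even hx hadj hRx (by omega) (by omega) h
    rw [← hend]
    exact .head hstep (ih hb (hx.mono fun i hi ↦ by rw [Set.mem_Iio] at hi ⊢; omega)
      (fun i hi ↦ hadj i (by omega)) (fun a ha b hb ↦ hchord a (by omega) b (by omega)) hbRx)

end ChordlessPath

def BadCyclesTurnable {V : Type} (G : SimpleGraph V) (n : ℕ) (B J : Set V) : Prop :=
  ∀ d : ZMod (2 * n) → V, IsBadCycle G J n d → Set.range d \ J = B →
    TSReach G J (symmDiff J (Set.range d))

def escapePath {V : Type} {n : ℕ} (c : ZMod (2 * n) → V) (v : V) (i : ℕ) : V :=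
  if i = 0 then v else c i

theorem escapePath_zero {V : Type} {n : ℕ} (c : ZMod (2 * n) → V) (v : V) :
    escapePath c v 0 = v :=
  if_pos rfl

theorem escapePath_of_ne_zero {V : Type} {n : ℕ} (c : ZMod (2 * n) → V) (v : V) {i : ℕ}
    (hi : i ≠ 0) : escapePath c v i = c i :=
  if_neg hi

namespace IsBadCycle

variable {V : Type} {G : SimpleGraph V} {I : Set V} {n : ℕ} {c : ZMod (2 * n) → V} {u v : V}

theorem two_le (hc : IsBadCycle G I n c) : 2 ≤ n := hc.1

theorem injective (hc : IsBadCycle G I n c) : Function.Injective c := hc.2.1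

theorem adj_add_one (hc : IsBadCycle G I n c) (j : ZMod (2 * n)) : G.Adj (c j) (c (j + 1)) :=
  hc.2.2.1 j

theorem adj_sub_one (hc : IsBadCycle G I n c) (j : ZMod (2 * n)) : G.Adj (c j) (c (j - 1)) := by
  simpa using (hc.adj_add_one (j - 1)).symm

theorem eq_add_one_or_eq_add_one (hc : IsBadCycle G I n c) {i j : ZMod (2 * n)}
    (h : G.Adj (c i) (c j)) : j = i + 1 ∨ i = j + 1 :=
  hc.2.2.2.1 i j h

theorem mem_iff_even (hc : IsBadCycle G I n c) (j : ZMod (2 * n)) : c j ∈ I ↔ Even j.val :=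
  hc.2.2.2.2 j

theorem mem_iff_parityHom (hc : IsBadCycle G I n c) (j : ZMod (2 * n)) :
    c j ∈ I ↔ parityHom n j = 0 :=
  (hc.mem_iff_even j).trans (even_val_iff_parityHom_eq_zero (by have := hc.two_le; omega) j)

theorem natCast_mem_iff (hc : IsBadCycle G I n c) (k : ℕ) : c k ∈ I ↔ Even k := by
  rw [hc.mem_iff_parityHom, map_natCast, ZMod.natCast_eq_zero_iff, even_iff_two_dvd]

theorem mem_add_one_iff (hc : IsBadCycle G I n c) (j : ZMod (2 * n)) :
    c (j + 1) ∈ I ↔ c j ∉ I := by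
  rw [hc.mem_iff_parityHom, hc.mem_iff_parityHom, map_add, map_one]
  generalize parityHom n j = a
  revert a
  decide

theorem mem_sub_one_iff (hc : IsBadCycle G I n c) (j : ZMod (2 * n)) :
    c (j - 1) ∈ I ↔ c j ∉ I := by
  have := hc.mem_add_one_iff (j - 1)
  rw [sub_add_cancel] at this
  tauto

theorem natCast_ne_zero (hc : IsBadCycle G I n c) {a : ℕ} (ha : 0 < a) (ha' : a < 4) :
    (a : ZMod (2 * n)) ≠ 0 := by
  rw [Ne, ZMod.natCast_eq_zero_iff]
  exact Nat.not_dvd_of_pos_of_lt ha (by have := hc.two_le; omega)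

theorem sub_one_ne_add_one (hc : IsBadCycle G I n c) (j : ZMod (2 * n)) :
    c (j - 1) ≠ c (j + 1) := fun h ↦
  hc.natCast_ne_zero (a := 2) (by norm_num) (by norm_num)
    (by push_cast; linear_combination -hc.injective h)

theorem not_adj_sub_one_add_one (hc : IsBadCycle G I n c) (j : ZMod (2 * n)) :
    ¬G.Adj (c (j - 1)) (c (j + 1)) := fun h ↦ by
  rcases hc.eq_add_one_or_eq_add_one h with h | h
  · exact hc.natCast_ne_zero (a := 1) (by norm_num) (by norm_num)
      (by push_cast; linear_combination h)
  · exact hc.natCast_ne_zero (a := 3) (by norm_num) (by norm_num)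
      (by push_cast; linear_combination -h)

theorem adj_sub_one_or_adj_add_one (hcf : ClawFree G) (hc : IsBadCycle G I n c) {x : V}
    (hx : x ∉ Set.range c) {j : ZMod (2 * n)} (h : G.Adj x (c j)) :
    G.Adj x (c (j - 1)) ∨ G.Adj x (c (j + 1)) :=
  hcf.adj_or_adj (hc.adj_sub_one j) (hc.adj_add_one j) h.symm (hc.sub_one_ne_add_one j)
    (hc.not_adj_sub_one_add_one j) (fun e ↦ hx ⟨_, e.symm⟩) (fun e ↦ hx ⟨_, e.symm⟩)

theorem not_adj_of_notMem_range (hcf : ClawFree G) (hI : Indep G I) (hc : IsBadCycle G I n c)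
    {x : V} (hx : x ∈ I) (hxc : x ∉ Set.range c) (j : ZMod (2 * n)) : ¬G.Adj x (c j) := by
  intro h
  by_cases hj : c j ∈ I
  · exact hI x hx _ hj h
  · rcases hc.adj_sub_one_or_adj_add_one hcf hxc h with h' | h'
    · exact hI x hx _ ((hc.mem_sub_one_iff j).2 hj) h'
    · exact hI x hx _ ((hc.mem_add_one_iff j).2 hj) h'

theorem indep_symmDiff (hcf : ClawFree G) (hI : Indep G I) (hc : IsBadCycle G I n c) :
    Indep G (symmDiff I (Set.range c)) := by
  intro y hy z hz h
  rw [Set.mem_symmDiff] at hy hz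
  rcases hy with ⟨hyI, hyc⟩ | ⟨⟨i, rfl⟩, hi⟩ <;> rcases hz with ⟨hzI, hzc⟩ | ⟨⟨j, rfl⟩, hj⟩
  · exact hI y hyI z hzI h
  · exact hc.not_adj_of_notMem_range hcf hI hyI hyc j h
  · exact hc.not_adj_of_notMem_range hcf hI hzI hzc i h.symm
  · rcases hc.eq_add_one_or_eq_add_one h with rfl | rfl
    · exact hj ((hc.mem_add_one_iff i).2 hi)
    · exact hi ((hc.mem_add_one_iff j).2 hj)

theorem cycB_eq (hc : IsBadCycle G I n c) : cycB c = Set.range c \ I := by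
  ext y
  constructor
  · rintro ⟨j, hj, rfl⟩
    exact ⟨⟨j, rfl⟩, fun h ↦ hj ((hc.mem_iff_even j).1 h)⟩
  · rintro ⟨⟨j, rfl⟩, hj⟩
    exact ⟨j, fun h ↦ hj ((hc.mem_iff_even j).2 h), rfl⟩

theorem not_isAcyclic_induce (hc : IsBadCycle G I n c) {s : Set V} (hs : Set.range c ⊆ s) :
    ¬(G.induce s).IsAcyclic :=
  not_isAcyclic_of_injective (by have := hc.two_le; omega) (f := fun j ↦ ⟨c j, hs ⟨j, rfl⟩⟩)
    (fun _ _ h ↦ hc.injective (congrArg Subtype.val h)) fun j ↦ hc.adj_add_one j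

theorem rotate (hc : IsBadCycle G I n c) {j₀ : ZMod (2 * n)} (hj₀ : c j₀ ∈ I) :
    IsBadCycle G I n (fun j ↦ c (j + j₀)) := by
  refine ⟨hc.two_le, fun a b h ↦ add_right_cancel (hc.injective h), fun j ↦ ?_,
    fun i j h ↦ ?_, fun j ↦ ?_⟩
  · simpa only [add_right_comm] using hc.adj_add_one (j + j₀)
  · rcases hc.eq_add_one_or_eq_add_one h with h | h
    exacts [Or.inl (by linear_combination h), Or.inr (by linear_combination h)]
  · rw [hc.mem_iff_parityHom, map_add, (hc.mem_iff_parityHom j₀).1 hj₀, add_zero,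
      even_val_iff_parityHom_eq_zero (by have := hc.two_le; omega)]

theorem reverse (hc : IsBadCycle G I n c) : IsBadCycle G I n (fun j ↦ c (-j)) := by
  refine ⟨hc.two_le, fun a b h ↦ neg_injective (hc.injective h), fun j ↦ ?_,
    fun i j h ↦ ?_, fun j ↦ ?_⟩
  · simpa only [neg_add, sub_eq_add_neg] using (hc.adj_sub_one (-j))
  · rcases hc.eq_add_one_or_eq_add_one h with h | h
    exacts [Or.inr (by linear_combination h), Or.inl (by linear_combination h)]
  · rw [hc.mem_iff_parityHom, map_neg, neg_eq_zero,
      even_val_iff_parityHom_eq_zero (by have := hc.two_le; omega)]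

theorem of_mem_iff (hc : IsBadCycle G I n c) {J : Set V} (h : ∀ j, c j ∈ J ↔ c j ∈ I) :
    IsBadCycle G J n c :=
  ⟨hc.two_le, hc.injective, hc.adj_add_one, hc.2.2.2.1, fun j ↦ (h j).trans (hc.mem_iff_even j)⟩

theorem exists_natCast_eq (hc : IsBadCycle G I n c) (j : ZMod (2 * n)) :
    ∃ k < 2 * n, (k : ZMod (2 * n)) = j := by
  have : NeZero (2 * n) := ⟨by have := hc.two_le; omega⟩
  exact ⟨j.val, ZMod.val_lt j, ZMod.natCast_zmod_val j⟩

theorem natCast_inj (hc : IsBadCycle G I n c) {a b : ℕ} (ha : a < 2 * n) (hb : b < 2 * n) :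
    c a = c b ↔ a = b :=
  hc.injective.eq_iff.trans (ZMod.natCast_inj_of_lt ha hb)

theorem natCast_adj (hc : IsBadCycle G I n c) {a b : ℕ} (ha : a < 2 * n) (hb : b < 2 * n)
    (h : G.Adj (c a) (c b)) : a + 1 = b ∨ b + 1 = a ∨ a = 0 ∨ b = 0 := by
  have succ_cast : ∀ p q : ℕ, p < 2 * n → q < 2 * n → (q : ZMod (2 * n)) = p + 1 →
      p + 1 = q ∨ q = 0 := by
    intro p q hp hq h
    rw [← Nat.cast_add_one, ZMod.natCast_eq_natCast_iff', Nat.mod_eq_of_lt hq] at h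
    rcases (by omega : p + 1 < 2 * n ∨ p + 1 = 2 * n) with h' | h'
    · rw [Nat.mod_eq_of_lt h'] at h
      exact Or.inl h.symm
    · rw [h', Nat.mod_self] at h
      exact Or.inr h
  rcases hc.eq_add_one_or_eq_add_one h with h | h
  · rcases succ_cast a b ha hb h with h | h <;> omega
  · rcases succ_cast b a hb ha h with h | h <;> omega

theorem mem_range_inter_iff (hc : IsBadCycle G I n c) {y : V} :
    y ∈ Set.range c ∩ I ↔ ∃ i < n, c (2 * i : ℕ) = y := by
  constructor
  · rintro ⟨⟨j, rfl⟩, hj⟩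
    obtain ⟨k, hk, rfl⟩ := hc.exists_natCast_eq j
    obtain ⟨i, rfl⟩ := (hc.natCast_mem_iff k).1 hj
    exact ⟨i, by omega, congrArg c (by push_cast; ring)⟩
  · rintro ⟨i, -, rfl⟩
    exact ⟨⟨_, rfl⟩, (hc.natCast_mem_iff _).2 (even_two_mul i)⟩

theorem mem_range_sdiff_iff (hc : IsBadCycle G I n c) {y : V} :
    y ∈ Set.range c \ I ↔ ∃ i < n, c (2 * i + 1 : ℕ) = y := by
  constructor
  · rintro ⟨⟨j, rfl⟩, hj⟩
    obtain ⟨k, hk, rfl⟩ := hc.exists_natCast_eq j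
    obtain ⟨i, rfl⟩ := Nat.not_even_iff_odd.1 ((hc.natCast_mem_iff k).not.1 hj)
    exact ⟨i, by omega, rfl⟩
  · rintro ⟨i, -, rfl⟩
    exact ⟨⟨_, rfl⟩, (hc.natCast_mem_iff _).not.2 (Nat.not_even_iff_odd.2 (odd_two_mul_add_one i))⟩

theorem notMem_range_of_indep_insert (hc : IsBadCycle G I n c)
    (hI' : Indep G (insert v (I \ {u}))) (hv : v ∉ I) : v ∉ Set.range c := by
  rintro ⟨j, rfl⟩
  have key : ∀ i, c i ∈ I → c i ≠ u → ¬G.Adj (c j) (c i) := fun i hi hiu ↦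
    hI' _ (Set.mem_insert _ _) _ (Set.mem_insert_of_mem _ ⟨hi, hiu⟩)
  by_cases hu : c (j - 1) = u
  · exact key _ ((hc.mem_add_one_iff j).2 hv)
      (fun h ↦ hc.sub_one_ne_add_one j (hu.trans h.symm)) (hc.adj_add_one j)
  · exact key _ ((hc.mem_sub_one_iff j).2 hv) hu (hc.adj_sub_one j)

theorem eq_zero_or_eq_one_or_eq_neg_one (hcf : ClawFree G) (hc : IsBadCycle G I n c)
    (hI' : Indep G (insert v (I \ {c 0}))) (hv : v ∉ I) {j : ZMod (2 * n)}
    (h : G.Adj v (c j)) : j = 0 ∨ j = 1 ∨ j = -1 := by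
  have key : ∀ i, c i ∈ I → G.Adj v (c i) → i = 0 := fun i hi hadj ↦ by_contra fun hi0 ↦
    hI' v (Set.mem_insert _ _) (c i)
      (Set.mem_insert_of_mem _ ⟨hi, fun e ↦ hi0 (hc.injective e)⟩) hadj
  by_cases hj : c j ∈ I
  · exact Or.inl (key j hj h)
  · rcases hc.adj_sub_one_or_adj_add_one hcf (hc.notMem_range_of_indep_insert hI' hv) h
      with h' | h'
    · exact Or.inr (Or.inl (by linear_combination key _ ((hc.mem_sub_one_iff j).2 hj) h'))
    · exact Or.inr (Or.inr (by linear_combination key _ ((hc.mem_add_one_iff j).2 hj) h'))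

theorem of_insert_sdiff (hc : IsBadCycle G I n c) (hur : u ∉ Set.range c)
    (hvr : v ∉ Set.range c) : IsBadCycle G (insert v (I \ {u})) n c :=
  hc.of_mem_iff fun j ↦ by
    have hjv : c j ≠ v := fun h ↦ hvr ⟨j, h⟩
    have hju : c j ≠ u := fun h ↦ hur ⟨j, h⟩
    simp [hjv, hju]

theorem tsStep_symmDiff_insert_sdiff (hcf : ClawFree G) (hI : Indep G I)
    (hc : IsBadCycle G I n c) (hI' : Indep G (insert v (I \ {u}))) (huv : G.Adj u v)
    (hu : u ∈ I) (hv : v ∉ I) (hur : u ∉ Set.range c) :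
    TSStep G (symmDiff (insert v (I \ {u})) (Set.range c)) (symmDiff I (Set.range c)) := by
  have hvr := hc.notMem_range_of_indep_insert hI' hv
  have heq : symmDiff (insert v (I \ {u})) (Set.range c) =
      insert v (symmDiff I (Set.range c) \ {u}) := by
    ext y
    by_cases hyu : y = u <;> by_cases hyv : y = v <;> simp_all [Set.mem_symmDiff]
  rw [heq]
  refine (tsStep_insert_sdiff (hc.indep_symmDiff hcf hI)
    (heq ▸ (hc.of_insert_sdiff hur hvr).indep_symmDiff hcf hI') huv
    (Set.mem_symmDiff.2 (Or.inl ⟨hu, hur⟩)) ?_).symm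
  simp [Set.mem_symmDiff, hv, hvr]

theorem update_zero (hcf : ClawFree G) (hc : IsBadCycle G I n c)
    (hI' : Indep G (insert v (I \ {c 0}))) (hv : v ∉ I) (h1 : G.Adj v (c 1))
    (hm : G.Adj v (c (-1))) : IsBadCycle G (insert v (I \ {c 0})) n (Function.update c 0 v) := by
  have hvr := hc.notMem_range_of_indep_insert hI' hv
  have h10 : (1 : ZMod (2 * n)) ≠ 0 := by
    exact_mod_cast hc.natCast_ne_zero (a := 1) (by norm_num) (by norm_num)
  set d := Function.update c 0 v
  have hd0 : d 0 = v := Function.update_self _ _ _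
  have hd : ∀ j ≠ 0, d j = c j := fun j hj ↦ Function.update_of_ne hj _ _
  refine ⟨hc.two_le, hc.injective.update 0 hvr, fun j ↦ ?_, fun i j h ↦ ?_, fun j ↦ ?_⟩
  · rcases eq_or_ne j 0 with rfl | hj
    · rwa [zero_add, hd0, hd 1 h10]
    · rcases eq_or_ne (j + 1) 0 with hj1 | hj1
      · rw [hj1, hd0, hd j hj, show j = -1 by linear_combination hj1]
        exact hm.symm
      · rw [hd j hj, hd _ hj1]
        exact hc.adj_add_one j
  · rcases eq_or_ne i 0 with rfl | hi <;> rcases eq_or_ne j 0 with rfl | hj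
    · exact absurd h G.irrefl
    · rw [hd0, hd j hj] at h
      rcases hc.eq_zero_or_eq_one_or_eq_neg_one hcf hI' hv h with h | rfl | rfl
      exacts [absurd h hj, Or.inl (zero_add 1).symm, Or.inr (by ring)]
    · rw [hd0, hd i hi] at h
      rcases hc.eq_zero_or_eq_one_or_eq_neg_one hcf hI' hv h.symm with h | rfl | rfl
      exacts [absurd h hi, Or.inr (zero_add 1).symm, Or.inl (by ring)]
    · rw [hd i hi, hd j hj] at h
      exact hc.eq_add_one_or_eq_add_one h
  · rcases eq_or_ne j 0 with rfl | hj
    · simp [hd0]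
    · have hjv : c j ≠ v := fun h ↦ hvr ⟨j, h⟩
      have hj0 : c j ≠ c 0 := fun h ↦ hj (hc.injective h)
      simpa [hd j hj, hjv, hj0] using hc.mem_iff_even j

theorem insert_sdiff_eq_union_escapePath (hc : IsBadCycle G I n c) :
    insert v (I \ {c 0}) = I \ Set.range c ∪ {y | ∃ i < n, escapePath c v (2 * i) = y} := by
  have hn := hc.two_le
  ext y
  simp only [Set.mem_insert_iff, Set.mem_union, Set.mem_sdiff, Set.mem_singleton_iff,
    Set.mem_ofPred_eq]
  constructor
  · rintro (rfl | ⟨hyI, hy0⟩)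
    · exact Or.inr ⟨0, by omega, escapePath_zero c y⟩
    · by_cases hyr : y ∈ Set.range c
      · obtain ⟨i, hi, rfl⟩ := hc.mem_range_inter_iff.1 ⟨hyr, hyI⟩
        refine Or.inr ⟨i, hi, escapePath_of_ne_zero c v fun h ↦ hy0 ?_⟩
        rw [h, Nat.cast_zero]
      · exact Or.inl ⟨hyI, hyr⟩
  · rintro (⟨hyI, hyr⟩ | ⟨i, hi, rfl⟩)
    · exact Or.inr ⟨hyI, fun h ↦ hyr ⟨0, h.symm⟩⟩
    · rcases eq_or_ne i 0 with rfl | hi0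
      · exact Or.inl (escapePath_zero c v)
      · rw [escapePath_of_ne_zero c v (by omega)]
        refine Or.inr ⟨(hc.mem_range_inter_iff.2 ⟨i, hi, rfl⟩).2, fun h ↦ hi0 ?_⟩
        rw [← Nat.cast_zero, hc.natCast_inj (by omega) (by omega)] at h
        omega

theorem symmDiff_eq_union_escapePath (hc : IsBadCycle G I n c) :
    symmDiff I (Set.range c) =
      I \ Set.range c ∪ {y | ∃ i < n, escapePath c v (2 * i + 1) = y} := by
  rw [Set.symmDiff_def]
  congr 1
  ext y
  rw [hc.mem_range_sdiff_iff]
  simp only [Set.mem_ofPred_eq, escapePath_of_ne_zero c v (Nat.succ_ne_zero _)]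

theorem escapePath_adj (hcf : ClawFree G) (hc : IsBadCycle G I n c)
    (hI' : Indep G (insert v (I \ {c 0}))) (hv : v ∉ I) (hm : ¬G.Adj v (c (-1))) {a b : ℕ}
    (ha : a < 2 * n) (hb : b < 2 * n) (h : G.Adj (escapePath c v a) (escapePath c v b)) :
    a + 1 = b ∨ b + 1 = a := by
  have hv_adj : ∀ b < 2 * n, b ≠ 0 → G.Adj v (c b) → b = 1 := fun b hb hb0 h ↦ by
    rcases hc.eq_zero_or_eq_one_or_eq_neg_one hcf hI' hv h with h' | h' | h'
    · rw [← Nat.cast_zero, ZMod.natCast_inj_of_lt hb (by omega)] at h'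
      contradiction
    · rwa [← Nat.cast_one, ZMod.natCast_inj_of_lt hb (by omega)] at h'
    · exact absurd (h' ▸ h) hm
  rcases eq_or_ne a 0 with rfl | ha0 <;> rcases eq_or_ne b 0 with rfl | hb0
  · exact absurd h G.irrefl
  · rw [escapePath_zero, escapePath_of_ne_zero c v hb0] at h
    exact Or.inl (hv_adj b hb hb0 h).symm
  · rw [escapePath_zero, escapePath_of_ne_zero c v ha0] at h
    exact Or.inr (hv_adj a ha ha0 h.symm).symm
  · rw [escapePath_of_ne_zero c v ha0, escapePath_of_ne_zero c v hb0] at h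
    rcases hc.natCast_adj ha hb h with h | h | h | h <;> omega

theorem tsReach_symmDiff_of_adj_one (hcf : ClawFree G) (hI : Indep G I)
    (hc : IsBadCycle G I n c) (hI' : Indep G (insert v (I \ {c 0}))) (hv : v ∉ I)
    (h1 : G.Adj v (c 1)) (hm : ¬G.Adj v (c (-1))) :
    TSReach G (insert v (I \ {c 0})) (symmDiff I (Set.range c)) := by
  have hvr := hc.notMem_range_of_indep_insert hI' hv
  rw [hc.insert_sdiff_eq_union_escapePath, hc.symmDiff_eq_union_escapePath]
  refine tsReach_slide_path (hI.mono Set.sdiff_subset) (fun a ha b hb h ↦ ?_) (fun i _ ↦ ?_)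
    (fun a ha b hb h ↦ hc.escapePath_adj hcf hI' hv hm ha hb h) ?_
  · rw [Set.mem_Iio] at ha hb
    rcases eq_or_ne a 0 with rfl | ha0 <;> rcases eq_or_ne b 0 with rfl | hb0
    · rfl
    · rw [escapePath_zero, escapePath_of_ne_zero c v hb0] at h
      exact absurd ⟨_, h.symm⟩ hvr
    · rw [escapePath_zero, escapePath_of_ne_zero c v ha0] at h
      exact absurd ⟨_, h⟩ hvr
    · rwa [escapePath_of_ne_zero c v ha0, escapePath_of_ne_zero c v hb0, hc.natCast_inj ha hb] at h
  · rcases eq_or_ne i 0 with rfl | hi0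
    · simpa [escapePath_zero, escapePath_of_ne_zero c v one_ne_zero] using h1
    · rw [escapePath_of_ne_zero c v (by omega), escapePath_of_ne_zero c v (by omega)]
      simpa using hc.adj_add_one (2 * i : ℕ)
  · rintro r ⟨hrI, hrc⟩ i -
    rcases eq_or_ne i 0 with rfl | hi0
    · rw [escapePath_zero]
      exact hI' r (Set.mem_insert_of_mem _ ⟨hrI, fun h ↦ hrc ⟨0, h.symm⟩⟩) v (Set.mem_insert _ _)
    · rw [escapePath_of_ne_zero c v hi0]
      exact hc.not_adj_of_notMem_range hcf hI hrI hrc _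

theorem tsReach_symmDiff_of_adj_zero (hcf : ClawFree G) (hI : Indep G I)
    (hc : IsBadCycle G I n c) (hI' : Indep G (insert v (I \ {c 0}))) (huv : G.Adj (c 0) v)
    (hv : v ∉ I) (h : BadCyclesTurnable G n (Set.range c \ I) (insert v (I \ {c 0}))) :
    TSReach G I (symmDiff I (Set.range c)) := by
  have hstep := tsStep_insert_sdiff hI hI' huv ((hc.mem_iff_even 0).2 (by simp)) hv
  have hvr := hc.notMem_range_of_indep_insert hI' hv
  have hc0 : c 0 ∈ I ∩ Set.range c := ⟨(hc.mem_iff_even 0).2 (by simp), 0, rfl⟩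
  by_cases h1 : G.Adj v (c 1) <;> by_cases hm : G.Adj v (c (-1))
  · have hrange := hc.injective.range_update 0 v
    have := h _ (hc.update_zero hcf hI' hv h1 hm)
      (by rw [hrange, Set.insert_sdiff_singleton_sdiff hc0.1 hvr])
    rw [hrange, Set.symmDiff_insert_sdiff_singleton hc0.1 hc0.2 hv hvr] at this
    exact .head hstep this
  · exact .head hstep (hc.tsReach_symmDiff_of_adj_one hcf hI hI' hv h1 hm)
  · have hrange : Set.range (fun j ↦ c (-j)) = Set.range c := neg_surjective.range_comp c
    have := hc.reverse.tsReach_symmDiff_of_adj_one hcf hI (by simpa using hI') hv hm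
      (by simpa using h1)
    rw [hrange] at this
    simp only [neg_zero] at this
    exact .head hstep this
  · rcases hc.adj_sub_one_or_adj_add_one hcf hvr huv.symm with h' | h'
    · exact absurd (by simpa using h') hm
    · exact absurd (by simpa using h') h1

end IsBadCycle

section Turnable

variable {V : Type} {G : SimpleGraph V} {n : ℕ} {B J J₁ : Set V}

theorem badCyclesTurnable_of_isAcyclic (h : (G.induce (J ∪ B)).IsAcyclic) :
    BadCyclesTurnable G n B J := by
  rintro d hd rfl
  refine absurd h (hd.not_isAcyclic_induce ?_)
  rw [Set.union_sdiff_self]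
  exact Set.subset_union_right

theorem BadCyclesTurnable.of_tsStep (hcf : ClawFree G) (hstep : TSStep G J J₁)
    (h : BadCyclesTurnable G n B J₁) : BadCyclesTurnable G n B J := by
  obtain ⟨u, v, huv, hu, hv, rfl⟩ := hstep.exists_eq_insert_sdiff
  rintro d hd rfl
  have hvr := hd.notMem_range_of_indep_insert hstep.2.1 hv
  by_cases hur : u ∈ Set.range d
  · obtain ⟨j₀, rfl⟩ := hur
    have hrange : Set.range (fun j ↦ d (j + j₀)) = Set.range d :=
      (add_right_surjective j₀).range_comp d
    have := (hd.rotate hu).tsReach_symmDiff_of_adj_zero hcf hstep.1 (by simpa using hstep.2.1)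
      (by simpa using huv) hv (by simpa [hrange] using h)
    rwa [hrange] at this
  · have hB : Set.range d \ insert v (J \ {u}) = Set.range d \ J := by
      ext y
      by_cases hyu : y = u <;> by_cases hyv : y = v <;> simp_all
    exact .head hstep (.tail (h d (hd.of_insert_sdiff hur hvr) hB)
      (hd.tsStep_symmDiff_insert_sdiff hcf hstep.1 hstep.2.1 huv hu hv hur))

end Turnable

theorem stmt_16_general {V : Type} (G : SimpleGraph V)
    (hcf : ClawFree G) (I : Set V)
    (n : ℕ) (c : ZMod (2*n) → V) (hc : IsBadCycle G I n c)
    (hres : Resolvable G I c) :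
    TSReach G I (symmDiff I (Set.range c)) := by
  obtain ⟨I', hreach, hacyclic⟩ := hres
  rw [hc.cycB_eq] at hacyclic
  suffices ∀ J, TSReach G J I' → BadCyclesTurnable G n (Set.range c \ I) J from
    this I hreach c hc rfl
  intro J hJ
  induction hJ using Relation.ReflTransGen.head_induction_on with
  | refl => exact badCyclesTurnable_of_isAcyclic hacyclic
  | head hstep _ ih => exact ih.of_tsStep hcf hstep

/-- A resolvable `I`-bad cycle can be turned: `I △ V(C)` is TS-reachable from `I`. -/
theorem stmt_16 {V : Type} [Fintype V] [DecidableEq V] (G : SimpleGraph V)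
    (hcf : ClawFree G) (I : Set V) (hI : Indep G I)
    (n : ℕ) (c : ZMod (2*n) → V) (hc : IsBadCycle G I n c)
    (hres : Resolvable G I c) :
    TSReach G I (symmDiff I (Set.range c)) :=
  stmt_16_general G hcf I n c hc hres
end

section
/- Let G be a claw-free graph and let I_0, …, I_m be a TS-sequence in which every token moves at most once (i.e., for all i ≤ j, if v ∈ I_j \ I_{j+1} then v ∈ I_i). Then every connected component of G[I_0 △ I_m] is a path of odd length. -/
/-!
A token that moves leaves a vertex of `I_0` and never moves again, so it enters a vertex of
`I_m \ I_0`: the slides form a perfect matching of `G[I_0 △ I_m]`, and an edge from the vertex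
left at step `i` to the vertex entered at step `j` forces `i ≤ j` (otherwise both lie in `I_i`).
Both sides are independent, so claw-freeness leaves every vertex with at most one neighbour
besides its partner. Ranking the vertex entered at step `j` by `2j` and the one left by `2j + 1`,
every vertex then has at most one neighbour of larger and at most one of smaller rank, so each
component is a path climbing in rank; the matching makes its order even.
-/

open SimpleGraph

namespace SimpleGraph

variable {W : Type*} {H : SimpleGraph W}

theorem Reachable.mem_of_adj_closed {s : Set W} (hs : ∀ u v, H.Adj u v → u ∈ s → v ∈ s)
    {u v : W} (huv : H.Reachable u v) (hu : u ∈ s) : v ∈ s := by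
  obtain ⟨w⟩ := huv
  induction w with
  | nil => exact hu
  | cons h _ ih => exact ih (hs _ _ h hu)

theorem ConnectedComponent.nonempty_iso_pathGraph_of_adj_iff {n : ℕ} (c : H.ConnectedComponent)
    (p : Fin n → W) (hp : Function.Injective p) {k₀ : Fin n} (hk₀ : p k₀ ∈ c.supp)
    (hadj : ∀ k y, H.Adj (p k) y ↔ ∃ l, (pathGraph n).Adj k l ∧ p l = y) :
    Nonempty (H.induce c.supp ≃g pathGraph n) := by
  let φ : pathGraph n →g H := ⟨p, fun {k l} h => (hadj k (p l)).2 ⟨l, h, rfl⟩⟩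
  have hmem (k : Fin n) : p k ∈ c.supp :=
    (ConnectedComponent.sound ((pathGraph_preconnected n k₀ k).map φ)).symm.trans hk₀
  have hcover (v : W) (hv : v ∈ c.supp) : v ∈ Set.range p := by
    refine (c.reachable_of_mem_supp hk₀ hv).mem_of_adj_closed ?_ ⟨k₀, rfl⟩
    rintro _ y hy ⟨k, rfl⟩
    obtain ⟨l, -, rfl⟩ := (hadj k y).1 hy
    exact ⟨l, rfl⟩
  let e : Fin n ≃ c.supp := Equiv.ofBijective (fun k => ⟨p k, hmem k⟩)
    ⟨fun k l h => hp (congrArg Subtype.val h), fun ⟨v, hv⟩ =>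
      let ⟨k, hk⟩ := hcover v hv; ⟨k, Subtype.ext hk⟩⟩
  refine ⟨(RelIso.mk e ?_).symm⟩
  intro k l
  show H.Adj (p k) (p l) ↔ _
  rw [hadj]
  exact ⟨fun ⟨l', h, hl'⟩ => hp hl' ▸ h, fun h => ⟨l, h, rfl⟩⟩

variable {β : Type*} [LinearOrder β]

theorem ConnectedComponent.nonempty_iso_pathGraph [Finite W] (ψ : W → β)
    (hne : ∀ x y, H.Adj x y → ψ x ≠ ψ y)
    (hup : ∀ x y z, H.Adj x y → H.Adj x z → ψ x < ψ y → ψ x < ψ z → y = z)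
    (hdown : ∀ x y z, H.Adj x y → H.Adj x z → ψ y < ψ x → ψ z < ψ x → y = z)
    (c : H.ConnectedComponent) : ∃ n, Nonempty (H.induce c.supp ≃g pathGraph n) := by
  classical
  -- Climb from a `ψ`-minimal vertex of `c` to a neighbour above for as long as there is one.
  obtain ⟨x₀, hx₀, hmin⟩ := c.supp.exists_min_image ψ c.supp.toFinite c.nonempty_supp
  let HasUp (x : W) : Prop := ∃ y, H.Adj x y ∧ ψ x < ψ y
  have (x : W) : ∃ y, HasUp x → H.Adj x y ∧ ψ x < ψ y :=
    (em (HasUp x)).elim (fun h => ⟨h.choose, fun _ => h.choose_spec⟩)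
      (fun h => ⟨x, fun h' => (h h').elim⟩)
  choose up hup' using this
  let q (k : ℕ) : W := up^[k] x₀
  have hq (k : ℕ) (h : HasUp (q k)) : H.Adj (q k) (q (k + 1)) ∧ ψ (q k) < ψ (q (k + 1)) := by
    simpa only [q, Function.iterate_succ_apply'] using hup' _ h
  have hstop : ∃ s, ¬HasUp (q s) := by
    by_contra! h
    exact not_injective_infinite_finite q
      (strictMono_nat_of_lt_succ fun k => (hq k (h k)).2).injective.of_comp
  let s := Nat.find hstop
  have hqs (k : ℕ) (hk : k < s) := hq k (not_not.1 (Nat.find_min hstop hk))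
  refine ⟨s + 1, c.nonempty_iso_pathGraph_of_adj_iff (fun k => q k) ?_ (k₀ := 0) hx₀ ?_⟩
  · refine StrictMono.injective (f := ψ ∘ fun k : Fin (s + 1) => q k) ?_ |>.of_comp
    exact Fin.strictMono_iff_lt_succ.2 fun k => (hqs k k.2).2
  · intro ⟨k, hk⟩ y
    simp only [pathGraph_adj]
    constructor
    · intro hy
      rcases (hne _ _ hy).lt_or_gt with hlt | hlt
      · have hks : k < s := lt_of_le_of_ne (by omega) <| by
          rintro rfl; exact Nat.find_spec hstop ⟨y, hy, hlt⟩
        have hk' := hqs k hks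
        exact ⟨⟨k + 1, by omega⟩, Or.inl rfl, (hup _ _ _ hy hk'.1 hlt hk'.2).symm⟩
      · obtain _ | j := k
        · exact absurd (hmin y (c.mem_supp_of_adj_mem_supp hx₀ hy)) hlt.not_ge
        · have hj := hqs j (by omega)
          exact ⟨⟨j, by omega⟩, Or.inr rfl, (hdown _ _ _ hy hj.1.symm hlt hj.2).symm⟩
    · rintro ⟨⟨l, hl⟩, h | h, rfl⟩
      · simp only at h; subst h; exact (hqs k (by omega)).1
      · simp only at h; subst h; exact (hqs l (by omega)).1.symm

theorem ConnectedComponent.even_natCard_supp {α : Type*} [Finite W] (T : W → α)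
    (hT : ∀ x, ∃! y, H.Adj x y ∧ T y = T x) (c : H.ConnectedComponent) :
    Even (Nat.card c.supp) := by
  classical
  have := Fintype.ofFinite W
  let K : SimpleGraph W :=
    { Adj x y := H.Adj x y ∧ T y = T x
      symm := ⟨fun _ _ h => ⟨h.1.symm, h.2.symm⟩⟩
      loopless := ⟨fun _ h => h.1.ne rfl⟩ }
  have hK : (K.toSubgraph (G := H) fun _ _ h => h.1).IsPerfectMatching :=
    Subgraph.isPerfectMatching_iff.2 hT
  rw [Nat.card_eq_fintype_card]
  exact c.even_card_of_isPerfectMatching hK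

theorem ConnectedComponent.exists_iso_pathGraph_two_mul {α : Type*} [Finite W] (ψ : W → β)
    (T : W → α) (hne : ∀ x y, H.Adj x y → ψ x ≠ ψ y)
    (hup : ∀ x y z, H.Adj x y → H.Adj x z → ψ x < ψ y → ψ x < ψ z → y = z)
    (hdown : ∀ x y z, H.Adj x y → H.Adj x z → ψ y < ψ x → ψ z < ψ x → y = z)
    (hT : ∀ x, ∃! y, H.Adj x y ∧ T y = T x) (c : H.ConnectedComponent) :
    ∃ t, 1 ≤ t ∧ Nonempty (H.induce c.supp ≃g pathGraph (2 * t)) := by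
  obtain ⟨n, ⟨e⟩⟩ := c.nonempty_iso_pathGraph ψ hne hup hdown
  have hn : Nat.card c.supp = n := by rw [Nat.card_congr e.toEquiv, Nat.card_fin]
  have hpos : 0 < n := have := c.nonempty_supp.to_subtype; hn ▸ Nat.card_pos
  obtain ⟨t, ht⟩ := hn ▸ c.even_natCard_supp T hT
  exact ⟨t, by omega, by rw [two_mul, ← ht]; exact ⟨e⟩⟩

end SimpleGraph

/-- `P (firstChange P + 1)` is the first value differing from `P 0` (junk `0` if there is none). -/
noncomputable def firstChange (P : ℕ → Prop) : ℕ := sInf {j | ¬(P (j + 1) ↔ P 0)}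

section FirstChange

variable {P : ℕ → Prop} {m : ℕ}

theorem not_iff_zero_of_le (hP : ∀ j < m, ¬(P (j + 1) ↔ P j) → (P j ↔ P 0)) {i j : ℕ}
    (hij : i ≤ j) (hjm : j ≤ m) (hi : ¬(P i ↔ P 0)) : ¬(P j ↔ P 0) := by
  induction j, hij using Nat.le_induction with
  | base => exact hi
  | succ j hij ih =>
    have := ih (by omega)
    have := hP j (by omega)
    tauto

theorem iff_zero_iff_le_firstChange (hP : ∀ j < m, ¬(P (j + 1) ↔ P j) → (P j ↔ P 0))
    (hm : ¬(P m ↔ P 0)) {j : ℕ} (hj : j ≤ m) : (P j ↔ P 0) ↔ j ≤ firstChange P := by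
  obtain _ | m := m
  · exact absurd Iff.rfl hm
  have hne : {j | ¬(P (j + 1) ↔ P 0)}.Nonempty := ⟨m, hm⟩
  refine ⟨fun h => ?_, fun h => ?_⟩
  · by_contra! hlt
    exact not_iff_zero_of_le hP hlt hj (Nat.sInf_mem hne) h
  · obtain _ | j := j
    · exact Iff.rfl
    · by_contra h'
      exact Nat.notMem_of_lt_sInf h h'

end FirstChange

section TokenSliding

variable {V : Type} {G : SimpleGraph V} {m : ℕ} {f : ℕ → Set V}

/-- A TS-sequence in which every token moves at most once, phrased as: a token only ever leaves
a vertex of `f 0`. -/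
structure IsOnceMovingTSSeq (G : SimpleGraph V) (m : ℕ) (f : ℕ → Set V) : Prop where
  step : ∀ i < m, TSStep G (f i) (f (i + 1))
  mem_zero_of_leave : ∀ j < m, ∀ v, v ∈ f j → v ∉ f (j + 1) → v ∈ f 0

noncomputable def moveTime (f : ℕ → Set V) (x : V) : ℕ := firstChange (x ∈ f ·)

noncomputable def moveRank (f : ℕ → Set V) (x : V) : ℕ :=
  open Classical in 2 * moveTime f x + if x ∈ f 0 then 1 else 0

namespace IsOnceMovingTSSeq

variable {x y z : V} {j : ℕ}

theorem indep (hf : IsOnceMovingTSSeq G m f) {i : ℕ} (hi : i ≤ m) (hm : 0 < m) :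
    Indep G (f i) := by
  rcases hi.lt_or_eq with hi | rfl
  · exact (hf.step i hi).1
  · simpa [Nat.sub_add_cancel hm] using (hf.step (i - 1) (by omega)).2.1

theorem notMem_zero_of_enter (hf : IsOnceMovingTSSeq G m f) (hj : j < m) (hx : x ∉ f j)
    (hx' : x ∈ f (j + 1)) : x ∉ f 0 := by
  obtain ⟨-, -, u, v, huv, hu, hv⟩ := hf.step j hj
  have hu' : u ∈ f j \ f (j + 1) := hu ▸ rfl
  have hxv : x ∈ ({v} : Set V) := hv ▸ ⟨hx', hx⟩
  rw [Set.mem_singleton_iff.1 hxv]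
  exact fun hv0 => hf.indep m.zero_le (by omega) u
    (hf.mem_zero_of_leave j hj u hu'.1 hu'.2) v hv0 huv

theorem mem_iff_mem_zero_of_flip (hf : IsOnceMovingTSSeq G m f) (hj : j < m)
    (h : ¬(x ∈ f (j + 1) ↔ x ∈ f j)) : x ∈ f j ↔ x ∈ f 0 := by
  by_cases hx : x ∈ f j
  · exact iff_of_true hx (hf.mem_zero_of_leave j hj x hx (by tauto))
  · exact iff_of_false hx (hf.notMem_zero_of_enter hj hx (by tauto))

theorem mem_symmDiff_of_flip (hf : IsOnceMovingTSSeq G m f) (hj : j < m)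
    (h : ¬(x ∈ f (j + 1) ↔ x ∈ f j)) : x ∈ symmDiff (f 0) (f m) := by
  have := not_iff_zero_of_le (P := (x ∈ f ·)) (fun _ hi => hf.mem_iff_mem_zero_of_flip hi)
    (Nat.succ_le_of_lt hj) le_rfl (by have := hf.mem_iff_mem_zero_of_flip hj h; tauto)
  rw [Set.mem_symmDiff]
  tauto

theorem mem_iff_mem_zero_iff_le_moveTime (hf : IsOnceMovingTSSeq G m f)
    (hx : x ∈ symmDiff (f 0) (f m)) (hj : j ≤ m) :
    (x ∈ f j ↔ x ∈ f 0) ↔ j ≤ moveTime f x :=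
  iff_zero_iff_le_firstChange (P := (x ∈ f ·)) (fun _ hi => hf.mem_iff_mem_zero_of_flip hi)
    (by rw [Set.mem_symmDiff] at hx; tauto) hj

theorem moveTime_lt (hf : IsOnceMovingTSSeq G m f) (hx : x ∈ symmDiff (f 0) (f m)) :
    moveTime f x < m := by
  have := hf.mem_iff_mem_zero_iff_le_moveTime hx le_rfl
  rw [Set.mem_symmDiff] at hx
  by_contra! h
  tauto

theorem eq_moveTime_iff (hf : IsOnceMovingTSSeq G m f) (hx : x ∈ symmDiff (f 0) (f m))
    (hj : j < m) : j = moveTime f x ↔ ¬(x ∈ f (j + 1) ↔ x ∈ f j) := by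
  have h₀ := hf.mem_iff_mem_zero_iff_le_moveTime hx hj.le
  have h₁ := hf.mem_iff_mem_zero_iff_le_moveTime (j := j + 1) hx hj
  have : j + 1 ≤ moveTime f x → j ≤ moveTime f x := by omega
  rw [show j = moveTime f x ↔ j ≤ moveTime f x ∧ ¬j + 1 ≤ moveTime f x by omega]
  tauto

theorem eq_of_moveTime_eq (hf : IsOnceMovingTSSeq G m f) (hx : x ∈ symmDiff (f 0) (f m))
    (hy : y ∈ symmDiff (f 0) (f m)) (hT : moveTime f x = moveTime f y)
    (hside : x ∈ f 0 ↔ y ∈ f 0) : x = y := by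
  set j := moveTime f x
  have hj := hf.moveTime_lt hx
  obtain ⟨-, -, u, v, -, hu, hv⟩ := hf.step j hj
  have hxj := (hf.mem_iff_mem_zero_iff_le_moveTime hx hj.le).2 le_rfl
  have hyj := (hf.mem_iff_mem_zero_iff_le_moveTime hy hj.le).2 hT.le
  have hxf := (hf.eq_moveTime_iff hx hj).1 rfl
  have hyf := (hf.eq_moveTime_iff hy hj).1 hT
  by_cases hx0 : x ∈ f 0
  · have hx' : x ∈ f j \ f (j + 1) := by tauto
    have hy' : y ∈ f j \ f (j + 1) := by tauto
    rw [hu] at hx' hy'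
    exact hx'.trans hy'.symm
  · have hx' : x ∈ f (j + 1) \ f j := by tauto
    have hy' : y ∈ f (j + 1) \ f j := by tauto
    rw [hv] at hx' hy'
    exact hx'.trans hy'.symm

theorem exists_adj_moveTime_eq (hf : IsOnceMovingTSSeq G m f)
    (hx : x ∈ symmDiff (f 0) (f m)) :
    ∃ y ∈ symmDiff (f 0) (f m), G.Adj x y ∧ moveTime f y = moveTime f x := by
  set j := moveTime f x
  have hj := hf.moveTime_lt hx
  obtain ⟨-, -, u, v, huv, hu, hv⟩ := hf.step j hj
  have hu' : u ∈ f j \ f (j + 1) := hu ▸ rfl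
  have hv' : v ∈ f (j + 1) \ f j := hv ▸ rfl
  have huf : ¬(u ∈ f (j + 1) ↔ u ∈ f j) := fun h => hu'.2 (h.2 hu'.1)
  have hvf : ¬(v ∈ f (j + 1) ↔ v ∈ f j) := fun h => hv'.2 (h.1 hv'.1)
  have huD := hf.mem_symmDiff_of_flip hj huf
  have hvD := hf.mem_symmDiff_of_flip hj hvf
  have hxf := (hf.eq_moveTime_iff hx hj).1 rfl
  by_cases hxj : x ∈ f j
  · have hxu : x ∈ f j \ f (j + 1) := by tauto
    rw [hu, Set.mem_singleton_iff] at hxu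
    exact ⟨v, hvD, hxu ▸ huv, ((hf.eq_moveTime_iff hvD hj).2 hvf).symm⟩
  · have hxv : x ∈ f (j + 1) \ f j := by tauto
    rw [hv, Set.mem_singleton_iff] at hxv
    exact ⟨u, huD, hxv ▸ huv.symm, ((hf.eq_moveTime_iff huD hj).2 huf).symm⟩

theorem not_iff_mem_zero_of_adj (hf : IsOnceMovingTSSeq G m f)
    (hx : x ∈ symmDiff (f 0) (f m)) (hy : y ∈ symmDiff (f 0) (f m)) (hxy : G.Adj x y) :
    ¬(x ∈ f 0 ↔ y ∈ f 0) := by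
  have hm : 0 < m := (Nat.zero_le _).trans_lt (hf.moveTime_lt hx)
  rw [Set.mem_symmDiff] at hx hy
  intro h
  by_cases hx0 : x ∈ f 0
  · exact hf.indep m.zero_le hm x hx0 y (h.1 hx0) hxy
  · exact hf.indep le_rfl hm x (by tauto) y (by tauto) hxy

theorem moveTime_le_of_adj (hf : IsOnceMovingTSSeq G m f) (hx : x ∈ symmDiff (f 0) (f m))
    (hy : y ∈ symmDiff (f 0) (f m)) (hx0 : x ∈ f 0) (hy0 : y ∉ f 0) (hxy : G.Adj x y) :
    moveTime f x ≤ moveTime f y := by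
  by_contra! h
  have hj := hf.moveTime_lt hx
  have hxj := (hf.mem_iff_mem_zero_iff_le_moveTime hx hj.le).2 le_rfl
  have hyj := (hf.mem_iff_mem_zero_iff_le_moveTime hy hj.le).not.2 h.not_ge
  exact hf.indep hj.le (by omega) x (by tauto) y (by tauto) hxy

theorem moveRank_ne_of_adj (hf : IsOnceMovingTSSeq G m f) (hx : x ∈ symmDiff (f 0) (f m))
    (hy : y ∈ symmDiff (f 0) (f m)) (hxy : G.Adj x y) : moveRank f x ≠ moveRank f y := by
  have := hf.not_iff_mem_zero_of_adj hx hy hxy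
  unfold moveRank
  split_ifs <;> first | tauto | omega

theorem moveRank_lt_iff (hf : IsOnceMovingTSSeq G m f) (hx : x ∈ symmDiff (f 0) (f m))
    (hy : y ∈ symmDiff (f 0) (f m)) (hxy : G.Adj x y) :
    moveRank f x < moveRank f y ↔ (x ∈ f 0 ↔ moveTime f y ≠ moveTime f x) := by
  have := hf.not_iff_mem_zero_of_adj hx hy hxy
  unfold moveRank
  by_cases hx0 : x ∈ f 0
  · have hy0 : y ∉ f 0 := by tauto
    have := hf.moveTime_le_of_adj hx hy hx0 hy0 hxy
    simp only [hx0, hy0, if_true, if_false, true_iff]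
    omega
  · have hy0 : y ∈ f 0 := by tauto
    have := hf.moveTime_le_of_adj hy hx hy0 hx0 hxy.symm
    simp only [hx0, hy0, if_true, if_false, false_iff, not_not]
    omega

end IsOnceMovingTSSeq

theorem ClawFree.eq_or_eq_or_eq (hG : ClawFree G) {x a b c : V} (ha : G.Adj x a)
    (hb : G.Adj x b) (hc : G.Adj x c) (hab : ¬G.Adj a b) (hac : ¬G.Adj a c)
    (hbc : ¬G.Adj b c) : a = b ∨ a = c ∨ b = c := by
  by_contra! h
  exact hG ⟨x, a, b, c, ha, hb, hc, h.1, h.2.1, h.2.2, hab, hac, hbc⟩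

namespace IsOnceMovingTSSeq

variable {x y z : V}

theorem eq_of_adj_of_moveTime_eq (hf : IsOnceMovingTSSeq G m f)
    (hx : x ∈ symmDiff (f 0) (f m)) (hy : y ∈ symmDiff (f 0) (f m))
    (hz : z ∈ symmDiff (f 0) (f m)) (hxy : G.Adj x y) (hxz : G.Adj x z)
    (hy' : moveTime f y = moveTime f x) (hz' : moveTime f z = moveTime f x) : y = z := by
  have := hf.not_iff_mem_zero_of_adj hx hy hxy
  have := hf.not_iff_mem_zero_of_adj hx hz hxz
  exact hf.eq_of_moveTime_eq hy hz (hy'.trans hz'.symm) (by tauto)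

-- The claw is centred at `x`, with its partner as third leaf.
theorem eq_of_adj_of_moveTime_ne (hf : IsOnceMovingTSSeq G m f) (hG : ClawFree G)
    (hx : x ∈ symmDiff (f 0) (f m)) (hy : y ∈ symmDiff (f 0) (f m))
    (hz : z ∈ symmDiff (f 0) (f m)) (hxy : G.Adj x y) (hxz : G.Adj x z)
    (hy' : moveTime f y ≠ moveTime f x) (hz' : moveTime f z ≠ moveTime f x) : y = z := by
  obtain ⟨p, hp, hxp, hp'⟩ := hf.exists_adj_moveTime_eq hx
  have hnadj {a b : V} (ha : a ∈ symmDiff (f 0) (f m)) (hb : b ∈ symmDiff (f 0) (f m))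
      (hxa : G.Adj x a) (hxb : G.Adj x b) : ¬G.Adj a b := fun hab => by
    have := hf.not_iff_mem_zero_of_adj hx ha hxa
    have := hf.not_iff_mem_zero_of_adj hx hb hxb
    exact hf.not_iff_mem_zero_of_adj ha hb hab (by tauto)
  rcases hG.eq_or_eq_or_eq hxy hxz hxp (hnadj hy hz hxy hxz) (hnadj hy hp hxy hxp)
    (hnadj hz hp hxz hxp) with h | rfl | rfl
  · exact h
  · exact absurd hp' hy'
  · exact absurd hp' hz'

theorem eq_of_adj_of_moveRank_lt (hf : IsOnceMovingTSSeq G m f) (hG : ClawFree G)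
    (hx : x ∈ symmDiff (f 0) (f m)) (hy : y ∈ symmDiff (f 0) (f m))
    (hz : z ∈ symmDiff (f 0) (f m)) (hxy : G.Adj x y) (hxz : G.Adj x z)
    (hy' : moveRank f x < moveRank f y) (hz' : moveRank f x < moveRank f z) : y = z := by
  rw [hf.moveRank_lt_iff hx hy hxy] at hy'
  rw [hf.moveRank_lt_iff hx hz hxz] at hz'
  by_cases hx0 : x ∈ f 0
  · exact hf.eq_of_adj_of_moveTime_ne hG hx hy hz hxy hxz (hy'.1 hx0) (hz'.1 hx0)
  · exact hf.eq_of_adj_of_moveTime_eq hx hy hz hxy hxz (by tauto) (by tauto)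

theorem eq_of_adj_of_lt_moveRank (hf : IsOnceMovingTSSeq G m f) (hG : ClawFree G)
    (hx : x ∈ symmDiff (f 0) (f m)) (hy : y ∈ symmDiff (f 0) (f m))
    (hz : z ∈ symmDiff (f 0) (f m)) (hxy : G.Adj x y) (hxz : G.Adj x z)
    (hy' : moveRank f y < moveRank f x) (hz' : moveRank f z < moveRank f x) : y = z := by
  replace hy' := (hf.moveRank_lt_iff hx hy hxy).not.1 hy'.not_gt
  replace hz' := (hf.moveRank_lt_iff hx hz hxz).not.1 hz'.not_gt
  by_cases hx0 : x ∈ f 0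
  · exact hf.eq_of_adj_of_moveTime_eq hx hy hz hxy hxz (by tauto) (by tauto)
  · exact hf.eq_of_adj_of_moveTime_ne hG hx hy hz hxy hxz (by tauto) (by tauto)

end IsOnceMovingTSSeq

end TokenSliding

theorem stmt_19_general {V : Type} [Fintype V] (G : SimpleGraph V)
    (hcf : ClawFree G) (m : ℕ) (f : ℕ → Set V)
    (hstep : ∀ i < m, TSStep G (f i) (f (i+1)))
    (honce : ∀ i j : ℕ, i ≤ j → j < m → ∀ v : V, v ∈ f j → v ∉ f (j+1) → v ∈ f i)
    (comp : (G.induce (symmDiff (f 0) (f m))).ConnectedComponent) :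
    ∃ t : ℕ, 1 ≤ t ∧
      Nonempty (((G.induce (symmDiff (f 0) (f m))).induce comp.supp) ≃g pathGraph (2*t)) := by
  have hf : IsOnceMovingTSSeq G m f := ⟨hstep, fun j hj => honce 0 j j.zero_le hj⟩
  refine comp.exists_iso_pathGraph_two_mul (fun x => moveRank f x.1) (fun x => moveTime f x.1)
    (fun x y => hf.moveRank_ne_of_adj x.2 y.2)
    (fun x y z hy hz hy' hz' =>
      Subtype.ext (hf.eq_of_adj_of_moveRank_lt hcf x.2 y.2 z.2 hy hz hy' hz'))
    (fun x y z hy hz hy' hz' =>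
      Subtype.ext (hf.eq_of_adj_of_lt_moveRank hcf x.2 y.2 z.2 hy hz hy' hz'))
    fun x => ?_
  obtain ⟨y, hy, hxy, hT⟩ := hf.exists_adj_moveTime_eq x.2
  exact ⟨⟨y, hy⟩, ⟨hxy, hT⟩, fun z hz =>
    Subtype.ext (hf.eq_of_adj_of_moveTime_eq x.2 z.2 hy hz.1 hxy hz.2 hT)⟩

/-- If in a TS-sequence every token moves at most once, then every component of
`G[I_0 △ I_m]` is a path of odd length. -/
theorem stmt_19 {V : Type} [Fintype V] [DecidableEq V] (G : SimpleGraph V)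
    (hcf : ClawFree G) (m : ℕ) (f : ℕ → Set V)
    (hstep : ∀ i < m, TSStep G (f i) (f (i+1)))
    (honce : ∀ i j : ℕ, i ≤ j → j < m → ∀ v : V, v ∈ f j → v ∉ f (j+1) → v ∈ f i)
    (comp : (G.induce (symmDiff (f 0) (f m))).ConnectedComponent) :
    ∃ t : ℕ, 1 ≤ t ∧
      Nonempty (((G.induce (symmDiff (f 0) (f m))).induce comp.supp) ≃g pathGraph (2*t)) :=
  stmt_19_general G hcf m f hstep honce comp
end
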